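/- Let A be a finite set of non-negative integers with 0 ∈ A, gcd(A) = 1, and b := max A (so b ≥ 1). Then for every a ∈ {0, …, b−1} there exists exactly one pair (g,k) ∈ ℕ × ℕ such that S_a ⊆ (g,k) + Λ⁺ and the set ((g,k) + Λ⁺) \ S_a is finite. -/
import Mathlib


open Pointwise

/-- The `h`-fold sumset `hA` of a finite set of naturals:
`0A = {0}` and `(n+1)A = A + nA`. -/
def iterFin (A : Finset ℕ) : ℕ → Finset ℕ
  | 0 => {0}
  | n + 1 => A + iterFin A n

/-- The cone over `A`: pairs `(n, h)` with `n ∈ hA`. -/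
def coneNat (A : Finset ℕ) : Set (ℕ × ℕ) := {p | p.1 ∈ iterFin A p.2}

/-- `Λ⁺ = {(bn, m+n) : m, n ∈ ℕ}`. -/
def lambdaPlus (b : ℕ) : Set (ℕ × ℕ) := {q | ∃ m n : ℕ, q = (b * n, m + n)}

/-- The residue class `S_a`: elements of the cone whose first coordinate is `≡ a (mod b)`. -/
def resClass (A : Finset ℕ) (b a : ℕ) : Set (ℕ × ℕ) := {p ∈ coneNat A | p.1 % b = a}

namespace VGaux

lemma zero_mem_iterFin {A : Finset ℕ} (h0 : 0 ∈ A) : ∀ h, 0 ∈ iterFin A h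
  | 0 => by simp [iterFin]
  | h + 1 => by
      have hrec := zero_mem_iterFin h0 h
      have := Finset.add_mem_add h0 hrec
      simpa [iterFin] using this

lemma mem_iterFin_add {A : Finset ℕ} :
    ∀ {h h' m n : ℕ}, m ∈ iterFin A h → n ∈ iterFin A h' → m + n ∈ iterFin A (h + h') := by
  intro h
  induction h with
  | zero =>
      intro h' m n hm hn
      simp only [iterFin, Finset.mem_singleton] at hm
      subst hm
      simpa using hn
  | succ h ih =>
      intro h' m n hm hn
      rcases Finset.mem_add.mp hm with ⟨x, hx, y, hy, hxy⟩
      have hyn : y + n ∈ iterFin A (h + h') := ih hy hn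
      have : x + (y + n) ∈ iterFin A (h + h' + 1) := Finset.add_mem_add hx hyn
      have heq : x + (y + n) = m + n := by omega
      have heq2 : h + h' + 1 = h + 1 + h' := by omega
      rwa [heq, heq2] at this

lemma mem_iterFin_one {A : Finset ℕ} {x : ℕ} (hx : x ∈ A) : x ∈ iterFin A 1 := by
  have h0 : (0 : ℕ) ∈ iterFin A 0 := by simp [iterFin]
  have := Finset.add_mem_add hx h0
  simpa [iterFin] using this

lemma mem_iterFin_of_le {A : Finset ℕ} (h0 : 0 ∈ A) {n h h' : ℕ} (hle : h ≤ h')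
    (hn : n ∈ iterFin A h) : n ∈ iterFin A h' := by
  have := mem_iterFin_add hn (zero_mem_iterFin h0 (h' - h))
  rw [add_zero] at this
  rwa [Nat.add_sub_cancel' hle] at this

lemma mul_mem_iterFin {A : Finset ℕ} {x : ℕ} (hx : x ∈ A) : ∀ t, x * t ∈ iterFin A t
  | 0 => by simp [iterFin]
  | t + 1 => by
      have := mem_iterFin_add (mem_iterFin_one hx) (mul_mem_iterFin hx t)
      have heq : x + x * t = x * (t + 1) := by ring
      have heq2 : 1 + t = t + 1 := by omega
      rwa [heq, heq2] at this

lemma iterFin_le {A : Finset ℕ} {b : ℕ} (hmax : ∀ x ∈ A, x ≤ b) :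
    ∀ {h n : ℕ}, n ∈ iterFin A h → n ≤ h * b := by
  intro h
  induction h with
  | zero => intro n hn; simp only [iterFin, Finset.mem_singleton] at hn; omega
  | succ h ih =>
      intro n hn
      rcases Finset.mem_add.mp hn with ⟨x, hx, y, hy, hxy⟩
      have h1 := hmax x hx
      have h2 := ih hy
      have : (h + 1) * b = h * b + b := by ring
      omega

lemma mem_resClass_iff {A : Finset ℕ} {b a n h : ℕ} :
    (n, h) ∈ resClass A b a ↔ n ∈ iterFin A h ∧ n % b = a := Iff.rfl

lemma mem_image_lambda {gk p : ℕ × ℕ} {b : ℕ} :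
    p ∈ (fun r => gk + r) '' lambdaPlus b ↔
      ∃ m n : ℕ, p = (gk.1 + b * n, gk.2 + (m + n)) := by
  constructor
  · rintro ⟨r, ⟨m, n, rfl⟩, rfl⟩
    exact ⟨m, n, by simp [Prod.ext_iff]⟩
  · rintro ⟨m, n, rfl⟩
    exact ⟨(b * n, m + n), ⟨m, n, rfl⟩, by simp [Prod.ext_iff]⟩

/-- The residues mod `b` realized by the additive closure of `A` form an
additive subgroup of `ZMod b`. -/
def resSub (A : Finset ℕ) (h0 : 0 ∈ A) (b : ℕ) (hb1 : 1 ≤ b) : AddSubgroup (ZMod b) where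
  carrier := {x | ∃ n h : ℕ, n ∈ iterFin A h ∧ (n : ZMod b) = x}
  zero_mem' := ⟨0, 0, by simp [iterFin], by simp⟩
  add_mem' := by
    rintro x y ⟨n, h, hn, rfl⟩ ⟨n', h', hn', rfl⟩
    exact ⟨n + n', h + h', mem_iterFin_add hn hn', by push_cast; ring⟩
  neg_mem' := by
    rintro x ⟨n, h, hn, rfl⟩
    refine ⟨(b - 1) * n, (b - 1) * h, ?_, ?_⟩
    · -- (b-1) * n ∈ iterFin A ((b-1)*h) by repeated addition
      clear hb1
      induction (b - 1) with
      | zero => simp [iterFin]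
      | succ t iht =>
          have := mem_iterFin_add hn iht
          have heq : n + t * n = (t + 1) * n := by ring
          have heq2 : h + t * h = (t + 1) * h := by ring
          rwa [heq, heq2] at this
    · push_cast
      have hcast : ((b - 1 : ℕ) : ZMod b) = -1 := by
        have : ((b - 1 : ℕ) : ZMod b) = (b : ZMod b) - 1 := by
          have hb' : (1 : ℕ) ≤ b := hb1
          push_cast [Nat.cast_sub hb'] ; ring
        rw [this, ZMod.natCast_self]; ring
      rw [hcast]; ring

lemma one_mem_resSub {A : Finset ℕ} (h0 : 0 ∈ A) (hgcd : A.gcd id = 1) {b : ℕ}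
    (hb1 : 1 ≤ b) : (1 : ZMod b) ∈ resSub A h0 b hb1 := by
  have key : ∀ B : Finset ℕ, B ⊆ A → ((B.gcd id : ℕ) : ZMod b) ∈ resSub A h0 b hb1 := by
    intro B
    induction B using Finset.induction_on with
    | empty =>
        intro _
        simp only [Finset.gcd_empty, Nat.cast_zero]
        exact (resSub A h0 b hb1).zero_mem
    | @insert x B hx ih =>
        intro hsub
        have hxA : x ∈ A := hsub (Finset.mem_insert_self x B)
        have hBA : B ⊆ A := fun y hy => hsub (Finset.mem_insert_of_mem hy)
        have hgB := ih hBA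
        have hxmem : ((x : ℕ) : ZMod b) ∈ resSub A h0 b hb1 :=
          ⟨x, 1, mem_iterFin_one hxA, rfl⟩
        rw [Finset.gcd_insert]
        simp only [id_eq]
        set g := B.gcd id with hgdef
        have hgcdeq : gcd x g = Nat.gcd x g := rfl
        rw [hgcdeq]
        have h1 : ((Nat.gcd x g : ℕ) : ZMod b) =
            (Nat.gcdA x g) • (x : ZMod b) + (Nat.gcdB x g) • ((g : ℕ) : ZMod b) := by
          have hbz := Nat.gcd_eq_gcd_ab x g
          have : ((Nat.gcd x g : ℕ) : ZMod b) = (((Nat.gcd x g : ℤ)) : ZMod b) := by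
            push_cast; ring
          rw [this, hbz]
          push_cast
          rw [zsmul_eq_mul, zsmul_eq_mul]
          ring
        rw [h1]
        exact (resSub A h0 b hb1).add_mem
          ((resSub A h0 b hb1).zsmul_mem hxmem _)
          ((resSub A h0 b hb1).zsmul_mem hgB _)
  have := key A (le_refl A)
  rw [hgcd] at this
  simpa using this

lemma exists_res (A : Finset ℕ) (h0 : 0 ∈ A) (hgcd : A.gcd id = 1) (b : ℕ)
    (hb1 : 1 ≤ b) (a : ℕ) : ∃ n h : ℕ, n ∈ iterFin A h ∧ n % b = a % b := by
  have h1 := one_mem_resSub h0 hgcd hb1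
  have hall : ((a : ℕ) : ZMod b) ∈ resSub A h0 b hb1 := by
    have : ((a : ℕ) : ZMod b) = a • (1 : ZMod b) := by simp
    rw [this]
    exact AddSubgroup.nsmul_mem _ h1 a
  obtain ⟨n, h, hn, hcast⟩ := hall
  exact ⟨n, h, hn, (ZMod.natCast_eq_natCast_iff _ _ _).mp hcast⟩

end VGaux

open VGaux
theorem virtual_generator_exists_unique (A : Finset ℕ) (h0 : 0 ∈ A)
    (hgcd : A.gcd id = 1) (b : ℕ) (hb : IsGreatest (A : Set ℕ) b) (hb1 : 1 ≤ b) :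
    ∀ a < b, ∃! gk : ℕ × ℕ,
      resClass A b a ⊆ (fun r => gk + r) '' lambdaPlus b ∧
      (((fun r => gk + r) '' lambdaPlus b) \ resClass A b a).Finite := by
  classical
  intro a ha
  have hbA : b ∈ A := hb.1
  have hmax : ∀ x ∈ A, x ≤ b := fun x hx => hb.2 hx
  -- the minimal first coordinate g
  have hPex : ∃ n : ℕ, ∃ h : ℕ, (n, h) ∈ resClass A b a := by
    obtain ⟨n, h, hn, hmod⟩ := exists_res A h0 hgcd b hb1 a
    rw [Nat.mod_eq_of_lt ha] at hmod
    exact ⟨n, h, hn, hmod⟩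
  set g := Nat.find hPex with hgdef
  obtain ⟨hg, hghmem⟩ : ∃ h : ℕ, (g, h) ∈ resClass A b a := Nat.find_spec hPex
  have hgiter : g ∈ iterFin A hg := hghmem.1
  have hgmod : g % b = a := hghmem.2
  have hgmin : ∀ n h : ℕ, (n, h) ∈ resClass A b a → g ≤ n :=
    fun n h hmem => Nat.find_min' hPex ⟨h, hmem⟩
  -- the minimal deficiency d0
  have hQex : ∃ d : ℕ, ∃ n h' : ℕ, (n, h') ∈ resClass A b a ∧ h' * b = n + d := by
    have hle : g ≤ hg * b := iterFin_le hmax hgiter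
    exact ⟨hg * b - g, g, hg, hghmem, by omega⟩
  set d0 := Nat.find hQex with hd0def
  obtain ⟨n0, h0', hmem0, hdef0⟩ :
      ∃ n h' : ℕ, (n, h') ∈ resClass A b a ∧ h' * b = n + d0 := Nat.find_spec hQex
  have hdmin : ∀ n h : ℕ, (n, h) ∈ resClass A b a → n + d0 ≤ h * b := by
    intro n h hmem
    have hle : n ≤ h * b := iterFin_le hmax hmem.1
    have : d0 ≤ h * b - n := Nat.find_min' hQex ⟨n, h, hmem, by omega⟩
    omega
  -- k
  have hdvd : b ∣ d0 + g := by
    apply Nat.dvd_of_mod_eq_zero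
    have h1 : (d0 + g) % b = (d0 + n0) % b := by
      rw [Nat.add_mod, hgmod, ← hmem0.2, ← Nat.add_mod]
    rw [h1, show d0 + n0 = h0' * b by omega, Nat.mul_mod_left]
  set k := (d0 + g) / b with hkdef
  have hk : k * b = d0 + g := Nat.div_mul_cancel hdvd
  -- t0 : n0 = g + b * t0 and h0' = k + t0
  have hgn0 : g ≤ n0 := hgmin _ _ hmem0
  have hdvd0 : b ∣ n0 - g := by
    have hmodeq : g ≡ n0 [MOD b] := by
      unfold Nat.ModEq; rw [hgmod, hmem0.2]
    exact (Nat.modEq_iff_dvd' hgn0).mp hmodeq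
  obtain ⟨t0, ht0⟩ := hdvd0
  have hn0eq : n0 = g + b * t0 := by omega
  have hh0' : h0' = k + t0 := by
    have h1 : h0' * b = (k + t0) * b := by
      have : (k + t0) * b = k * b + t0 * b := by ring
      have h2 : t0 * b = b * t0 := by ring
      omega
    have hbpos : 0 < b := hb1
    exact Nat.eq_of_mul_eq_mul_right hbpos h1
  -- the claimed generator
  refine ⟨(g, k), ⟨?_, ?_⟩, ?_⟩
  · -- containment
    rintro ⟨n, h⟩ hmem
    have h1 : g ≤ n := hgmin _ _ hmem
    have hdvdn : b ∣ n - g := by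
      have hmodeq : g ≡ n [MOD b] := by
        unfold Nat.ModEq; rw [hgmod, hmem.2]
      exact (Nat.modEq_iff_dvd' h1).mp hmodeq
    obtain ⟨t, htt⟩ := hdvdn
    have hneq : n = g + b * t := by omega
    have hdef : n + d0 ≤ h * b := hdmin _ _ hmem
    have hht : k + t ≤ h := by
      have h2 : (k + t) * b ≤ h * b := by
        have : (k + t) * b = k * b + t * b := by ring
        have h3 : t * b = b * t := by ring
        omega
      exact Nat.le_of_mul_le_mul_right h2 hb1
    refine mem_image_lambda.mpr ⟨h - (k + t), t, ?_⟩
    have : h = k + (h - (k + t) + t) := by omega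
    simp only [Prod.mk.injEq]
    exact ⟨by omega, by omega⟩
  · -- cofiniteness
    apply Set.Finite.subset ((Set.finite_Iic (g + b * t0)).prod (Set.finite_Iic (hg + t0)))
    rintro ⟨x, y⟩ ⟨hxmem, hxnot⟩
    obtain ⟨m, j, hpair⟩ := mem_image_lambda.mp hxmem
    simp only [Prod.mk.injEq] at hpair
    obtain ⟨hx, hy⟩ := hpair
    subst hx; subst hy
    have hmodx : (g + b * j) % b = a := by
      rw [Nat.add_mul_mod_self_left, hgmod]
    by_cases hj : t0 ≤ j
    · exfalso
      apply hxnot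
      have hsplit : b * j = b * t0 + b * (j - t0) := by
        rw [← Nat.mul_add]; congr 1; omega
      have hbmul : b * (j - t0) ∈ iterFin A (j - t0) := mul_mem_iterFin hbA (j - t0)
      have hmem1 : g + b * j ∈ iterFin A (h0' + (j - t0)) := by
        have := mem_iterFin_add hmem0.1 hbmul
        have heq : n0 + b * (j - t0) = g + b * j := by omega
        rwa [heq] at this
      have hle : h0' + (j - t0) ≤ k + (m + j) := by omega
      exact ⟨mem_iterFin_of_le h0 hle hmem1, hmodx⟩
    · -- j < t0
      have hxb : g + b * j ≤ g + b * t0 := by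
        have : b * j ≤ b * t0 := Nat.mul_le_mul_left b (by omega)
        omega
      have hyb : k + (m + j) ≤ hg + t0 := by
        by_contra hcon
        apply hxnot
        have hmemc : g + b * j ∈ iterFin A (hg + j) :=
          mem_iterFin_add hgiter (mul_mem_iterFin hbA j)
        have hle : hg + j ≤ k + (m + j) := by omega
        exact ⟨mem_iterFin_of_le h0 hle hmemc, hmodx⟩
      exact ⟨Set.mem_Iic.mpr hxb, Set.mem_Iic.mpr hyb⟩
  · -- uniqueness
    rintro ⟨g', k'⟩ ⟨hsub', hfin'⟩
    -- g' ≤ g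
    obtain ⟨m1, n1, hpair1⟩ := mem_image_lambda.mp (hsub' hghmem)
    simp only [Prod.mk.injEq] at hpair1
    have hg'le : g' ≤ g := by omega
    -- g ≤ g'
    have hinf1 : ∃ m : ℕ, (g', k' + m) ∈ resClass A b a := by
      by_contra hcon
      push_neg at hcon
      have hsubinf : Set.range (fun m : ℕ => ((g', k' + m) : ℕ × ℕ)) ⊆
          ((fun r => (g', k') + r) '' lambdaPlus b) \ resClass A b a := by
        rintro p ⟨m, rfl⟩
        refine ⟨mem_image_lambda.mpr ⟨m, 0, ?_⟩, hcon m⟩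
        simp
      have hinj : Function.Injective (fun m : ℕ => ((g', k' + m) : ℕ × ℕ)) := by
        intro x y hxy
        simp only [Prod.mk.injEq] at hxy
        omega
      exact (Set.infinite_range_of_injective hinj) (hfin'.subset hsubinf)
    obtain ⟨m2, hm2⟩ := hinf1
    have hge : g ≤ g' := hgmin _ _ hm2
    have hgg : g' = g := le_antisymm hg'le hge
    subst hgg
    -- k ≤ k'
    have hinf2 : ∃ j : ℕ, (g + b * j, k' + j) ∈ resClass A b a := by
      by_contra hcon
      push_neg at hcon
      have hsubinf : Set.range (fun j : ℕ => ((g + b * j, k' + j) : ℕ × ℕ)) ⊆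
          ((fun r => (g, k') + r) '' lambdaPlus b) \ resClass A b a := by
        rintro p ⟨j, rfl⟩
        refine ⟨mem_image_lambda.mpr ⟨0, j, ?_⟩, hcon j⟩
        simp
      have hinj : Function.Injective (fun j : ℕ => ((g + b * j, k' + j) : ℕ × ℕ)) := by
        intro x y hxy
        simp only [Prod.mk.injEq] at hxy
        omega
      exact (Set.infinite_range_of_injective hinj) (hfin'.subset hsubinf)
    obtain ⟨j2, hj2⟩ := hinf2
    have hble : g + b * j2 + d0 ≤ (k' + j2) * b := hdmin _ _ hj2
    have hkk' : k ≤ k' := by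
      have h1 : (k' + j2) * b = k' * b + j2 * b := by ring
      have h2 : j2 * b = b * j2 := by ring
      have h3 : k * b ≤ k' * b := by omega
      exact Nat.le_of_mul_le_mul_right h3 hb1
    -- k' ≤ k
    obtain ⟨m3, n3, hpair3⟩ := mem_image_lambda.mp (hsub' hmem0)
    simp only [Prod.mk.injEq] at hpair3
    obtain ⟨hp31, hp32⟩ := hpair3
    have hk'k : k' ≤ k := by
      -- h0' * b = n0 + d0, n0 = g + b * n3, h0' = k' + (m3 + n3)
      have h1 : h0' * b = (k' + (m3 + n3)) * b := by rw [← hp32]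
      have h2 : (k' + (m3 + n3)) * b = k' * b + m3 * b + n3 * b := by ring
      have h3 : n3 * b = b * n3 := by ring
      have h4 : k' * b ≤ k * b := by omega
      exact Nat.le_of_mul_le_mul_right h4 hb1
    have : k' = k := le_antisymm hk'k hkk'
    simp [this]
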